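/- Let s ∈ ℝ and p ∈ (0,∞]. Then the Besov-type sequence space ḃ^{s,1/p}_{p,∞}(ℝⁿ) coincides with ḃ^{s}_{∞,∞}(ℝⁿ) with equivalent norms: for every sequence t = {t_Q}, sup_{P dyadic} |P|^{-1/p} sup_{j ≥ j_P} ( ∫_P [ Σ_{Q⊂P, ℓ(Q)=2^{-j}} |Q|^{-s/n-1/2} |t_Q| χ_Q(x) ]^p dx )^{1/p} is comparable (with constants depending only on n, s, p) to sup_{Q dyadic} |Q|^{-s/n-1/2} |t_Q|. -/

import Mathlib

open MeasureTheory ENNReal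

/-- A dyadic cube `Q_{jk} = 2^{-j}([0,1)^n + k)` in `ℝⁿ`, recorded by its
generation `j ∈ ℤ` and position `k ∈ ℤⁿ`. -/
structure DyadicCube (n : ℕ) where
  j : ℤ
  k : Fin n → ℤ

namespace DyadicCube

/-- The dyadic cube as a subset of `ℝⁿ`. -/
def toSet {n : ℕ} (Q : DyadicCube n) : Set (Fin n → ℝ) :=
  {x | ∀ i, (Q.k i : ℝ) * (2 : ℝ) ^ (-Q.j) ≤ x i ∧
        x i < ((Q.k i : ℝ) + 1) * (2 : ℝ) ^ (-Q.j)}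

/-- The Lebesgue measure `|Q| = 2^{-jn}` of a dyadic cube, as an element of `ℝ≥0∞`. -/
noncomputable def vol {n : ℕ} (Q : DyadicCube n) : ℝ≥0∞ :=
  (2 : ℝ≥0∞) ^ (-(Q.j : ℝ) * n)

/-- The characteristic function `χ_Q`, with values in `ℝ≥0∞`. -/
noncomputable def ind {n : ℕ} (Q : DyadicCube n) (x : Fin n → ℝ) : ℝ≥0∞ :=
  Q.toSet.indicator (fun _ => (1 : ℝ≥0∞)) x

end DyadicCube

open DyadicCube

/-- The coefficient `|Q|^{-s/n - 1/2}`. -/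
noncomputable def coeff {n : ℕ} (s : ℝ) (Q : DyadicCube n) : ℝ≥0∞ :=
  Q.vol ^ (-(s / (n : ℝ)) - 1 / 2)

/-- The `ℓ^q`-norm `(Σ_i a_i^q)^{1/q}` of a family of extended nonnegative reals,
with the usual modification (`sup`) when `q = ∞`. -/
noncomputable def lqSum {ι : Type*} (q : ℝ≥0∞) (a : ι → ℝ≥0∞) : ℝ≥0∞ :=
  if q = ∞ then ⨆ i, a i else (∑' i, a i ^ q.toReal) ^ (1 / q.toReal)

/-- The `L^p`-norm `(∫_A g^p dx)^{1/p}` over a set `A ⊆ ℝⁿ`, with the usual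
modification (`sup` over `x ∈ A`) when `p = ∞`. -/
noncomputable def lpIntOn {n : ℕ} (p : ℝ≥0∞) (A : Set (Fin n → ℝ))
    (g : (Fin n → ℝ) → ℝ≥0∞) : ℝ≥0∞ :=
  if p = ∞ then ⨆ x ∈ A, g x
  else (∫⁻ x in A, g x ^ p.toReal) ^ (1 / p.toReal)

/-- The Triebel–Lizorkin-type sequence norm
`‖t‖_{ḟ^{s,τ}_{p,q}} = sup_P |P|^{-τ} ( ∫_P ( Σ_{Q ⊆ P} [|Q|^{-s/n-1/2} |t_Q| χ_Q(x)]^q )^{p/q} dx )^{1/p}`,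
with the usual modifications when `p = ∞` or `q = ∞`. -/
noncomputable def fNorm (n : ℕ) (s τ : ℝ) (p q : ℝ≥0∞) (t : DyadicCube n → ℂ) : ℝ≥0∞ :=
  ⨆ P : DyadicCube n, P.vol ^ (-τ) *
    lpIntOn p P.toSet fun x =>
      lqSum q fun Q : {Q : DyadicCube n // Q.toSet ⊆ P.toSet} =>
        coeff s Q.1 * ‖t Q.1‖₊ * ind Q.1 x

/-- The Besov-type sequence norm
`‖t‖_{ḃ^{s,τ}_{p,q}} = sup_P |P|^{-τ} ( Σ_{j ≥ j_P} ( ∫_P [ Σ_{Q ⊆ P, ℓ(Q)=2^{-j}} |Q|^{-s/n-1/2} |t_Q| χ_Q(x) ]^p dx )^{q/p} )^{1/q}`,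
with the usual modifications when `p = ∞` or `q = ∞`. -/
noncomputable def bNorm (n : ℕ) (s τ : ℝ) (p q : ℝ≥0∞) (t : DyadicCube n → ℂ) : ℝ≥0∞ :=
  ⨆ P : DyadicCube n, P.vol ^ (-τ) *
    lqSum q fun j : {j : ℤ // P.j ≤ j} =>
      lpIntOn p P.toSet fun x =>
        ∑' Q : {Q : DyadicCube n // Q.toSet ⊆ P.toSet ∧ Q.j = j.1},
          coeff s Q.1 * ‖t Q.1‖₊ * ind Q.1 x

/-- The `ḟ^{σ}_{∞,∞} = ḃ^{σ}_{∞,∞}` sequence norm `sup_Q |Q|^{-σ/n - 1/2} |t_Q|`. -/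
noncomputable def supNorm (n : ℕ) (σ : ℝ) (t : DyadicCube n → ℂ) : ℝ≥0∞ :=
  ⨆ Q : DyadicCube n, coeff σ Q * ‖t Q‖₊

/-- The test sequence with `t_{R_j} = |R_j|^{s/n + 1/2 + τ - 1/p}` for
`R_j = [0,2^{-j})^n` (the dyadic cube with `k = 0`), and `t_Q = 0` otherwise. -/
noncomputable def testSeq (n : ℕ) (s τ p : ℝ) : DyadicCube n → ℂ := fun Q =>
  if Q.k = 0 then
    ((((2 : ℝ) ^ (-(Q.j : ℝ) * n)) ^ (s / n + 1 / 2 + τ - 1 / p) : ℝ) : ℂ)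
  else 0

/-- The cube `R_j = [0, 2^{-j})^n`. -/
def Rcube (n : ℕ) (j : ℤ) : DyadicCube n := ⟨j, 0⟩

/-! With `τ = 1/p` the factor `|P|^{-1/p}` turns the `L^p` norm over `P` into an `L^p` average.
Dyadic cubes of the same generation are disjoint, so at each point the level-`j` sum has at most
one nonzero term, which is at most `sup_Q |Q|^{-s/n-1/2} |t_Q|`; conversely, for `P = Q` and
`j = j_Q` the level sum equals `|Q|^{-s/n-1/2} |t_Q|` on all of `Q`. Hence the two norms are
equal, and `c = C = 1` works. -/

open Function

theorem tsum_mul_indicator_le_iSup {ι α : Type*} {s : ι → Set α}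
    (hs : Pairwise (Disjoint on s)) (a : ι → ℝ≥0∞) (x : α) :
    ∑' i, a i * (s i).indicator 1 x ≤ ⨆ i, a i := by
  by_cases hx : ∃ i, x ∈ s i
  · obtain ⟨i, hi⟩ := hx
    have hother : ∀ i' ≠ i, a i' * (s i').indicator 1 x = 0 := fun i' hi' => by
      simp [Set.indicator_of_notMem fun h => Set.disjoint_left.mp (hs hi') h hi]
    rw [tsum_eq_single i hother, Set.indicator_of_mem hi, Pi.one_apply, mul_one]
    exact le_iSup a i
  · push Not at hx
    simp [Set.indicator_of_notMem (hx _)]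

theorem le_tsum_mul_indicator {ι α : Type*} {s : ι → Set α} (a : ι → ℝ≥0∞) {x : α} {i : ι}
    (hx : x ∈ s i) : a i ≤ ∑' i, a i * (s i).indicator 1 x := by
  simpa [Set.indicator_of_mem hx] using
    ENNReal.le_tsum (f := fun i => a i * (s i).indicator 1 x) i

theorem ENNReal.rpow_neg_mul_mul_rpow {V : ℝ≥0∞} (h₀ : V ≠ 0) (hV : V ≠ ∞) (r : ℝ) (a : ℝ≥0∞) :
    V ^ (-r) * (a * V ^ r) = a := by
  rw [mul_left_comm, ← ENNReal.rpow_add _ _ h₀ hV, neg_add_cancel, ENNReal.rpow_zero, mul_one]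

section lpIntOn

variable {n : ℕ} {p : ℝ≥0∞} {A : Set (Fin n → ℝ)} {g : (Fin n → ℝ) → ℝ≥0∞}

theorem lpIntOn_le (hp : 0 < p) {M : ℝ≥0∞} (hg : ∀ x ∈ A, g x ≤ M) :
    lpIntOn p A g ≤ M * volume A ^ (1 / p.toReal) := by
  rw [lpIntOn]
  split_ifs with htop
  · simpa [htop] using iSup₂_le hg
  have hr : 0 < p.toReal := ENNReal.toReal_pos hp.ne' htop
  calc (∫⁻ x in A, g x ^ p.toReal) ^ (1 / p.toReal)
      ≤ (∫⁻ _ in A, M ^ p.toReal) ^ (1 / p.toReal) := by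
        gcongr 1
        exact setLIntegral_mono measurable_const fun x hx => by gcongr; exact hg x hx
    _ = M * volume A ^ (1 / p.toReal) := by
        rw [setLIntegral_const, ENNReal.mul_rpow_of_nonneg _ _ (by positivity),
          ← ENNReal.rpow_mul, mul_one_div_cancel hr.ne', ENNReal.rpow_one]

theorem le_lpIntOn (hp : 0 < p) (hA : MeasurableSet A) (hne : A.Nonempty) {m : ℝ≥0∞}
    (hg : ∀ x ∈ A, m ≤ g x) : m * volume A ^ (1 / p.toReal) ≤ lpIntOn p A g := by
  rw [lpIntOn]
  split_ifs with htop
  · obtain ⟨x, hx⟩ := hne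
    simpa [htop] using (hg x hx).trans (le_iSup₂ (f := fun x (_ : x ∈ A) => g x) x hx)
  have hr : 0 < p.toReal := ENNReal.toReal_pos hp.ne' htop
  calc m * volume A ^ (1 / p.toReal) = (∫⁻ _ in A, m ^ p.toReal) ^ (1 / p.toReal) := by
        rw [setLIntegral_const, ENNReal.mul_rpow_of_nonneg _ _ (by positivity),
          ← ENNReal.rpow_mul, mul_one_div_cancel hr.ne', ENNReal.rpow_one]
    _ ≤ (∫⁻ x in A, g x ^ p.toReal) ^ (1 / p.toReal) := by
        gcongr 1
        exact setLIntegral_mono' hA fun x hx => by gcongr; exact hg x hx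

end lpIntOn

namespace DyadicCube

variable {n : ℕ}

theorem toSet_eq_pi (Q : DyadicCube n) : Q.toSet = Set.univ.pi fun i =>
    Set.Ico ((Q.k i : ℝ) * 2 ^ (-Q.j)) (((Q.k i : ℝ) + 1) * 2 ^ (-Q.j)) := by
  ext x
  simp [toSet, Set.mem_pi, Set.mem_Ico]

theorem measurableSet_toSet (Q : DyadicCube n) : MeasurableSet Q.toSet := by
  rw [toSet_eq_pi]
  exact MeasurableSet.univ_pi fun _ => measurableSet_Ico

theorem nonempty_toSet (Q : DyadicCube n) : Q.toSet.Nonempty := by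
  rw [toSet_eq_pi, Set.univ_pi_nonempty_iff]
  exact fun i => Set.nonempty_Ico.mpr <| by gcongr; exact lt_add_one _

theorem volume_toSet (Q : DyadicCube n) : volume Q.toSet = Q.vol := by
  have hside : ENNReal.ofReal ((2 : ℝ) ^ (-Q.j)) = (2 : ℝ≥0∞) ^ (-(Q.j : ℝ)) := by
    rw [← Real.rpow_intCast, ← ENNReal.ofReal_rpow_of_pos two_pos]
    norm_num
  simp only [toSet_eq_pi, volume_pi_pi, Real.volume_Ico, ← sub_mul, add_sub_cancel_left,
    one_mul, hside, Finset.prod_const, Finset.card_univ, Fintype.card_fin]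
  rw [vol, ← ENNReal.rpow_natCast, ← ENNReal.rpow_mul]

theorem vol_ne_zero (Q : DyadicCube n) : Q.vol ≠ 0 := by
  simp [vol, ENNReal.rpow_eq_zero_iff]

theorem vol_ne_top (Q : DyadicCube n) : Q.vol ≠ ∞ := by
  simp [vol, ENNReal.rpow_eq_top_iff]

theorem eq_of_mem_toSet_of_j_eq {Q Q' : DyadicCube n} (hj : Q.j = Q'.j) {x : Fin n → ℝ}
    (hx : x ∈ Q.toSet) (hx' : x ∈ Q'.toSet) : Q = Q' := by
  obtain ⟨j, k⟩ := Q
  obtain ⟨j', k'⟩ := Q'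
  obtain rfl : j = j' := hj
  have hside : (0 : ℝ) < 2 ^ (-j) := zpow_pos two_pos _
  have hfloor : ∀ i (m : ℤ), (m : ℝ) * 2 ^ (-j) ≤ x i → x i < ((m : ℝ) + 1) * 2 ^ (-j) →
      ⌊x i / 2 ^ (-j)⌋ = m := fun i m hlo hhi =>
    Int.floor_eq_iff.mpr ⟨(le_div_iff₀ hside).mpr hlo, (div_lt_iff₀ hside).mpr hhi⟩
  congr 1
  funext i
  rw [← hfloor i (k i) (hx i).1 (hx i).2, ← hfloor i (k' i) (hx' i).1 (hx' i).2]

theorem disjoint_toSet_of_j_eq {Q Q' : DyadicCube n} (hj : Q.j = Q'.j) (hne : Q ≠ Q') :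
    Disjoint Q.toSet Q'.toSet :=
  Set.disjoint_left.mpr fun _ hx hx' => hne (eq_of_mem_toSet_of_j_eq hj hx hx')

end DyadicCube

section norms

variable {n : ℕ} {s : ℝ} {p : ℝ≥0∞}

theorem tsum_coeff_mul_ind_le_supNorm {S : DyadicCube n → Prop}
    (hS : ∀ Q Q', S Q → S Q' → Q.j = Q'.j) (t : DyadicCube n → ℂ) (x : Fin n → ℝ) :
    ∑' Q : {Q // S Q}, coeff s Q.1 * ‖t Q.1‖₊ * ind Q.1 x ≤ supNorm n s t := by
  have hdisj : Pairwise (Disjoint on fun Q : {Q // S Q} => Q.1.toSet) := fun Q Q' hne =>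
    disjoint_toSet_of_j_eq (hS _ _ Q.2 Q'.2) (Subtype.coe_ne_coe.mpr hne)
  exact (tsum_mul_indicator_le_iSup hdisj (fun Q => coeff s Q.1 * ‖t Q.1‖₊) x).trans <|
    iSup_le fun Q => le_iSup (fun Q => coeff s Q * (‖t Q‖₊ : ℝ≥0∞)) Q.1

theorem bNorm_le_supNorm (hp : 0 < p) (t : DyadicCube n → ℂ) :
    bNorm n s (1 / p.toReal) p ∞ t ≤ supNorm n s t := by
  refine iSup_le fun P => ?_
  rw [lqSum, if_pos rfl, ENNReal.mul_iSup]
  refine iSup_le fun j => ?_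
  calc P.vol ^ (-(1 / p.toReal)) * lpIntOn p P.toSet _
      ≤ P.vol ^ (-(1 / p.toReal)) * (supNorm n s t * volume P.toSet ^ (1 / p.toReal)) := by
        gcongr
        exact lpIntOn_le hp fun x _ =>
          tsum_coeff_mul_ind_le_supNorm (fun _ _ hQ hQ' => hQ.2.trans hQ'.2.symm) t x
    _ = supNorm n s t := by
        rw [volume_toSet, ENNReal.rpow_neg_mul_mul_rpow P.vol_ne_zero P.vol_ne_top]

theorem supNorm_le_bNorm (hp : 0 < p) (t : DyadicCube n → ℂ) :
    supNorm n s t ≤ bNorm n s (1 / p.toReal) p ∞ t := by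
  refine iSup_le fun Q => ?_
  calc coeff s Q * (‖t Q‖₊ : ℝ≥0∞)
      = Q.vol ^ (-(1 / p.toReal)) *
          (coeff s Q * ‖t Q‖₊ * volume Q.toSet ^ (1 / p.toReal)) := by
        rw [volume_toSet, ENNReal.rpow_neg_mul_mul_rpow Q.vol_ne_zero Q.vol_ne_top]
    _ ≤ Q.vol ^ (-(1 / p.toReal)) * lpIntOn p Q.toSet fun x =>
          ∑' Q' : {Q' : DyadicCube n // Q'.toSet ⊆ Q.toSet ∧ Q'.j = Q.j},
            coeff s Q'.1 * ‖t Q'.1‖₊ * ind Q'.1 x := by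
        gcongr
        exact le_lpIntOn hp Q.measurableSet_toSet Q.nonempty_toSet fun x hx =>
          le_tsum_mul_indicator
            (s := fun Q' : {Q' // Q'.toSet ⊆ Q.toSet ∧ Q'.j = Q.j} => Q'.1.toSet)
            (fun Q' => coeff s Q'.1 * ‖t Q'.1‖₊) (i := ⟨Q, subset_rfl, rfl⟩) hx
    _ ≤ bNorm n s (1 / p.toReal) p ∞ t := by
        refine le_iSup_of_le Q ?_
        rw [lqSum, if_pos rfl]
        gcongr
        exact le_iSup_of_le (⟨Q.j, le_rfl⟩ : {j : ℤ // Q.j ≤ j}) le_rfl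

theorem bNorm_eq_supNorm (hp : 0 < p) (t : DyadicCube n → ℂ) :
    bNorm n s (1 / p.toReal) p ∞ t = supNorm n s t :=
  (bNorm_le_supNorm hp t).antisymm (supNorm_le_bNorm hp t)

end norms

theorem stmt14_general (n : ℕ) (s : ℝ) (p : ℝ≥0∞) (hp : 0 < p) :
    ∃ c C : ℝ≥0∞, 0 < c ∧ C ≠ ∞ ∧ ∀ t : DyadicCube n → ℂ,
      c * supNorm n s t ≤ bNorm n s (1 / p.toReal) p ∞ t ∧
      bNorm n s (1 / p.toReal) p ∞ t ≤ C * supNorm n s t :=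
  ⟨1, 1, one_pos, one_ne_top, fun t => by
    rw [one_mul, bNorm_eq_supNorm hp]
    exact ⟨le_rfl, le_rfl⟩⟩

/-- for `s ∈ ℝ` and `p ∈ (0,∞]`, the Besov-type sequence space
`ḃ^{s,1/p}_{p,∞}` coincides with `ḃ^{s}_{∞,∞}` with equivalent norms: for every
sequence `t`, `‖t‖_{ḃ^{s,1/p}_{p,∞}}` is comparable to `sup_Q |Q|^{-s/n-1/2}|t_Q|`
(with `1/∞ := 0`). -/
theorem stmt14 (n : ℕ) (hn : 0 < n) (s : ℝ) (p : ℝ≥0∞) (hp : 0 < p) :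
    ∃ c C : ℝ≥0∞, 0 < c ∧ C ≠ ∞ ∧ ∀ t : DyadicCube n → ℂ,
      c * supNorm n s t ≤ bNorm n s (1 / p.toReal) p ∞ t ∧
      bNorm n s (1 / p.toReal) p ∞ t ≤ C * supNorm n s t :=
  stmt14_general n s p hp
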